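/- arXiv:0812.4269 — 5 statements merged into one kernel-verified Lean document; each statement's English description precedes it below -/
import Mathlib

section
/- Let x be a point in the boundary of the closed Weyl chamber C̄ and let n be a unit inward normal vector to C at x (i.e., |n| = 1 and ⟨x − a, n⟩ ≤ 0 for all a ∈ C̄). Then there exists a simple root α ∈ S with ⟨x, α⟩ = 0 and ⟨n, α⟩ ≠ 0. -/
/-!
If the normal `n` were orthogonal to every wall of `C̄` through `x`, then moving `x` a little in
the direction `-n` would stay inside `C̄`: the walls through `x` do not see the move, and the
others are at positive distance. The normal inequality at `x - t • n` then reads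
`t * ‖n‖ ^ 2 ≤ 0`, forcing `n = 0`.
-/

open scoped RealInnerProductSpace

open Filter Topology

section

variable {V : Type*} [NormedAddCommGroup V] [InnerProductSpace ℝ V]

theorem eventually_inner_nonneg_add_smul {S : Finset V} {x v : V}
    (hx : ∀ α ∈ S, 0 ≤ ⟪α, x⟫) (hv : ∀ α ∈ S, ⟪α, x⟫ = 0 → ⟪α, v⟫ = 0) :
    ∀ᶠ t in 𝓝 (0 : ℝ), ∀ α ∈ S, 0 ≤ ⟪α, x + t • v⟫ := by
  refine (Finset.eventually_all S).2 fun α hα => ?_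
  rcases (hx α hα).eq_or_lt with hzero | hpos
  · refine Eventually.of_forall fun t => ?_
    rw [inner_add_right, inner_smul_right, ← hzero, hv α hα hzero.symm]
    simp
  · have hcont : Continuous fun t : ℝ => ⟪α, x + t • v⟫ := by fun_prop
    have := hcont.tendsto' 0 ⟪α, x⟫ (by simp)
    exact (this.eventually_const_lt hpos).mono fun t ht => ht.le

theorem exists_pos_inner_nonneg_add_smul {S : Finset V} {x v : V}
    (hx : ∀ α ∈ S, 0 ≤ ⟪α, x⟫) (hv : ∀ α ∈ S, ⟪α, x⟫ = 0 → ⟪α, v⟫ = 0) :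
    ∃ t : ℝ, 0 < t ∧ ∀ α ∈ S, 0 ≤ ⟪α, x + t • v⟫ :=
  ((eventually_mem_nhdsWithin (a := (0 : ℝ)) (s := Set.Ioi 0)).and
    ((eventually_inner_nonneg_add_smul hx hv).filter_mono nhdsWithin_le_nhds)).exists

theorem eq_zero_of_normal_of_inner_eq_zero {S : Finset V} {x n : V}
    (hx : ∀ α ∈ S, 0 ≤ ⟪α, x⟫)
    (hn : ∀ a : V, (∀ α ∈ S, 0 ≤ ⟪α, a⟫) → ⟪x - a, n⟫ ≤ 0)
    (hperp : ∀ α ∈ S, ⟪α, x⟫ = 0 → ⟪α, n⟫ = 0) : n = 0 := by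
  obtain ⟨t, ht, hmem⟩ := exists_pos_inner_nonneg_add_smul hx fun α hα h0 => by
    rw [inner_neg_right, hperp α hα h0, neg_zero]
  have hle : t * ‖n‖ ^ 2 ≤ 0 := by
    simpa [real_inner_smul_left, real_inner_self_eq_norm_sq] using hn _ hmem
  simpa using nonpos_of_mul_nonpos_right hle ht

end

theorem exists_simple_root_nonorthogonal_to_normal_general
    {V : Type*} [NormedAddCommGroup V] [InnerProductSpace ℝ V]
    (S : Finset V)
    (x : V) (hx : ∀ α ∈ S, 0 ≤ ⟪α, x⟫)
    (n : V) (hn1 : ‖n‖ = 1)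
    (hn : ∀ a : V, (∀ α ∈ S, 0 ≤ ⟪α, a⟫) → ⟪x - a, n⟫ ≤ 0) :
    ∃ α ∈ S, ⟪x, α⟫ = 0 ∧ ⟪n, α⟫ ≠ 0 := by
  by_contra! hperp
  have hn0 : n = 0 := eq_zero_of_normal_of_inner_eq_zero hx hn fun α hα hxα => by
    rw [real_inner_comm, hperp α hα (by rwa [real_inner_comm])]
  simp [hn0] at hn1

/-- Lemma 2 / "Abass": If `x` lies on the boundary of the closed Weyl
chamber `C̄ = {y | ⟪α, y⟫ ≥ 0 ∀ α ∈ S}` and `n` is a unit inward normal vector to `C`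
at `x`, then there is a simple root `α ∈ S` with `⟪x, α⟫ = 0` and `⟪n, α⟫ ≠ 0`. -/
theorem exists_simple_root_nonorthogonal_to_normal
    {V : Type*} [NormedAddCommGroup V] [InnerProductSpace ℝ V] [FiniteDimensional ℝ V]
    (S : Finset V) (hS0 : ∀ α ∈ S, α ≠ (0 : V))
    (hCne : {y : V | ∀ α ∈ S, 0 < ⟪α, y⟫}.Nonempty)
    (x : V) (hx : ∀ α ∈ S, 0 ≤ ⟪α, x⟫)
    (hxbd : ∃ α₀ ∈ S, ⟪α₀, x⟫ = 0)
    (n : V) (hn1 : ‖n‖ = 1)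
    (hn : ∀ a : V, (∀ α ∈ S, 0 ≤ ⟪α, a⟫) → ⟪x - a, n⟫ ≤ 0) :
    ∃ α ∈ S, ⟪x, α⟫ = 0 ∧ ⟪n, α⟫ ≠ 0 :=
  exists_simple_root_nonorthogonal_to_normal_general S x hx n hn1 hn
end

section
/- Let g : D → ℝ be a convex differentiable function on an open convex subset D ⊆ ℝ^m. Then for every a ∈ D there exist constants b, c, d > 0 such that for all x ∈ D: ⟨∇g(x), x − a⟩ ≥ b·|∇g(x)| − c·|x − a| − d. -/
/-
Continuity of `g` at `a` gives a closed ball of radius `r` around `a`, inside `D`, on which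
`g ≤ g a + 1`. Testing the gradient inequality at `x` against the point `a + r ∇g(x)/‖∇g(x)‖` of
that ball gives `g x + r‖∇g(x)‖ - ⟪∇g(x), x - a⟫ ≤ g a + 1`, and the gradient inequality at `a`
bounds `g x` from below by `g a - ‖∇g(a)‖‖x - a‖`.
-/

open scoped RealInnerProductSpace

theorem ConvexOn.le_of_hasFDerivAt {E : Type*} [NormedAddCommGroup E] [NormedSpace ℝ E]
    {s : Set E} {f : E → ℝ} {f' : E →L[ℝ] ℝ} {x y : E} (hf : ConvexOn ℝ s f)
    (hx : x ∈ s) (hy : y ∈ s) (hf' : HasFDerivAt f f' x) :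
    f x + f' (y - x) ≤ f y := by
  set φ : ℝ →ᵃ[ℝ] E := AffineMap.lineMap x y
  have hφ0 : φ 0 = x := AffineMap.lineMap_apply_zero x y
  have hφ1 : φ 1 = y := AffineMap.lineMap_apply_one x y
  have hline : ConvexOn ℝ (φ ⁻¹' s) (f ∘ φ) := hf.comp_affineMap φ
  have hderiv : HasDerivAt (f ∘ φ) (f' (y - x)) 0 :=
    HasFDerivAt.comp_hasDerivAt (0 : ℝ) (hφ0 ▸ hf') AffineMap.hasDerivAt_lineMap
  have hslope := hline.le_slope_of_hasDerivAt (hφ0 ▸ hx : φ 0 ∈ s) (hφ1 ▸ hy : φ 1 ∈ s)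
    one_pos hderiv
  simp only [slope_def_field, Function.comp_apply, hφ0, hφ1, sub_zero, div_one] at hslope
  linarith

variable {E : Type*} [NormedAddCommGroup E] [InnerProductSpace ℝ E] [CompleteSpace E]
  {s : Set E} {g : E → ℝ}

theorem ConvexOn.add_inner_gradient_le {x y : E} (hg : ConvexOn ℝ s g) (hx : x ∈ s) (hy : y ∈ s)
    (hgx : DifferentiableAt ℝ g x) :
    g x + ⟪gradient g x, y - x⟫ ≤ g y := by
  simpa using hg.le_of_hasFDerivAt hx hy (hasGradientAt_iff_hasFDerivAt.1 hgx.hasGradientAt)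

theorem ConvexOn.sub_norm_gradient_mul_le {a x : E} (hg : ConvexOn ℝ s g) (ha : a ∈ s)
    (hx : x ∈ s) (hga : DifferentiableAt ℝ g a) :
    g a - ‖gradient g a‖ * ‖x - a‖ ≤ g x := by
  have hcs := (abs_le.1 (abs_real_inner_le_norm (gradient g a) (x - a))).1
  linarith [hg.add_inner_gradient_le ha hx hga]

theorem ConvexOn.mul_norm_gradient_le {a x : E} {r M : ℝ} (hg : ConvexOn ℝ s g)
    (hr : 0 ≤ r) (hball : Metric.closedBall a r ⊆ s) (hM : ∀ y ∈ Metric.closedBall a r, g y ≤ M)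
    (hx : x ∈ s) (hgx : DifferentiableAt ℝ g x) :
    r * ‖gradient g x‖ + g x - M ≤ ⟪gradient g x, x - a⟫ := by
  set u := gradient g x
  set y := a + (r / ‖u‖) • u
  have hy : y ∈ Metric.closedBall a r := by
    rw [Metric.mem_closedBall, dist_eq_norm, add_sub_cancel_left, norm_smul, Real.norm_eq_abs,
      abs_of_nonneg (by positivity)]
    rcases eq_or_ne ‖u‖ 0 with hu | hu
    · simpa [hu] using hr
    · rw [div_mul_cancel₀ _ hu]
  have hinner : ⟪u, y - x⟫ = r * ‖u‖ - ⟪u, x - a⟫ := by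
    rcases eq_or_ne u 0 with hu | hu
    · simp [hu]
    · have : y - x = (r / ‖u‖) • u - (x - a) := by simp only [y]; abel
      rw [this, inner_sub_right, real_inner_smul_right, real_inner_self_eq_norm_sq]
      field_simp
  have hgrad := hg.add_inner_gradient_le hx (hball hy) hgx
  linarith [hM y hy]

theorem convex_gradient_inequality_general
    {m : ℕ} (D : Set (EuclideanSpace ℝ (Fin m)))
    (hDopen : IsOpen D)
    (g : EuclideanSpace ℝ (Fin m) → ℝ)
    (hgconv : ConvexOn ℝ D g)
    (hgdiff : ∀ x ∈ D, DifferentiableAt ℝ g x)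
    (a : EuclideanSpace ℝ (Fin m)) (ha : a ∈ D) :
    ∃ b c d : ℝ, 0 < b ∧ 0 < c ∧ 0 < d ∧
      ∀ x ∈ D, b * ‖gradient g x‖ - c * ‖x - a‖ - d ≤ ⟪gradient g x, x - a⟫ := by
  have hnhds : ∀ᶠ y in nhds a, y ∈ D ∧ g y < g a + 1 :=
    (hDopen.eventually_mem ha).and
      ((hgdiff a ha).continuousAt.eventually (gt_mem_nhds (lt_add_one _)))
  obtain ⟨r, hr, hball⟩ := Metric.nhds_basis_closedBall.mem_iff.1 hnhds
  refine ⟨r, ‖gradient g a‖ + 1, 1, hr, by positivity, one_pos, fun x hx => ?_⟩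
  have hupper := hgconv.mul_norm_gradient_le hr.le (fun y hy => (hball hy).1)
    (fun y hy => (hball hy).2.le) hx (hgdiff x hx)
  have hlower := hgconv.sub_norm_gradient_mul_le ha hx (hgdiff a ha)
  linarith [norm_nonneg (x - a)]

/-- Cépa–Lépingle, (2.1): For a convex `C¹` function `g` on an open
convex set `D ⊆ ℝ^m` and any `a ∈ D`, there are constants `b, c, d > 0` such that
`⟪∇g(x), x - a⟫ ≥ b‖∇g(x)‖ - c‖x - a‖ - d` for all `x ∈ D`. -/
theorem convex_gradient_inequality
    {m : ℕ} (D : Set (EuclideanSpace ℝ (Fin m)))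
    (hDopen : IsOpen D) (hDconv : Convex ℝ D)
    (g : EuclideanSpace ℝ (Fin m) → ℝ)
    (hgconv : ConvexOn ℝ D g)
    (hgdiff : ∀ x ∈ D, DifferentiableAt ℝ g x)
    (a : EuclideanSpace ℝ (Fin m)) (ha : a ∈ D) :
    ∃ b c d : ℝ, 0 < b ∧ 0 < c ∧ 0 < d ∧
      ∀ x ∈ D, b * ‖gradient g x‖ - c * ‖x - a‖ - d ≤ ⟪gradient g x, x - a⟫ :=
  convex_gradient_inequality_general D hDopen g hgconv hgdiff a ha
end

section
/- Let R be a reduced root system with simple system S, positive system R₊, and α₀ ∈ S, and let k : R → [0,∞) be invariant under the Weyl group action on roots. Then for every x in the open Weyl chamber C, the sum Σ_{α ∈ R₊ \ {α₀}} k(α)·⟨α, α₀⟩/⟨α, x⟩ is less than or equal to 0. -/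
open scoped RealInnerProductSpace

/-!
Let `σ` be the reflection in the simple root `α₀`. It permutes `R₊ \ {α₀}`: a positive root
`α ≠ α₀` has a positive coefficient at some other simple root, which `σ` does not change,
so `σ α` is again positive. Pairing `α` with `σ α`, and using `k (σ α) = k α`,
`⟪σ α, α₀⟫ = -⟪α, α₀⟫` and `⟪σ α, x⟫ = ⟪α, x⟫ - 2 ⟪α, α₀⟫ ⟪α₀, x⟫ / ‖α₀‖²`, the two terms add up to
`-2 k(α) ⟪α, α₀⟫² ⟪α₀, x⟫ / (‖α₀‖² ⟪α, x⟫ ⟪σ α, x⟫) ≤ 0`.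
-/

theorem Finset.sum_nonpos_of_involutive {ι M : Type*} [AddCommMonoid M] [LinearOrder M]
    [IsOrderedAddMonoid M] {s : Finset ι} {f : ι → M} {σ : ι → ι} (hσ : Function.Involutive σ)
    (hmaps : ∀ a ∈ s, σ a ∈ s) (hpair : ∀ a ∈ s, f a + f (σ a) ≤ 0) :
    ∑ a ∈ s, f a ≤ 0 := by
  have hreindex : ∑ a ∈ s, f (σ a) = ∑ a ∈ s, f a :=
    Finset.sum_nbij' σ σ hmaps hmaps (fun a _ => hσ a) (fun a _ => hσ a) fun _ _ => rfl
  rw [← add_self_nonpos_iff]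
  nth_rewrite 2 [← hreindex]
  rw [← Finset.sum_add_distrib]
  exact Finset.sum_nonpos hpair

theorem sum_smul_eq_smul_of_add_eq_smul {V : Type*} [AddCommGroup V] [Module ℝ V] {S : Finset V}
    (hS : LinearIndepOn ℝ id (S : Set V)) {α₀ : V} (hα₀ : α₀ ∈ S) {c d : V → ℝ}
    (hc : ∀ s ∈ S, 0 ≤ c s) (hd : ∀ s ∈ S, 0 ≤ d s) {t : ℝ}
    (h : ∑ s ∈ S, c s • s + ∑ s ∈ S, d s • s = t • α₀) :
    ∑ s ∈ S, c s • s = c α₀ • α₀ := by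
  classical
  have hcoeff := linearIndepOn_finset_iff.mp hS (fun s => c s + d s - if s = α₀ then t else 0) (by
    simp only [id, sub_smul, add_smul, ite_smul, zero_smul]
    rw [Finset.sum_sub_distrib, Finset.sum_add_distrib, Finset.sum_ite_eq' S α₀, if_pos hα₀, h,
      sub_self])
  refine Finset.sum_eq_single α₀ (fun s hs hsα₀ => ?_) (absurd hα₀)
  have hcd := hcoeff s hs
  rw [if_neg hsα₀, sub_zero] at hcd
  rw [show c s = 0 by linarith [hc s hs, hd s hs], zero_smul]

section Reflection

variable {V : Type*} [NormedAddCommGroup V] [InnerProductSpace ℝ V]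

noncomputable def rootReflection (α β : V) : V := β - (2 * ⟪α, β⟫ / ‖α‖ ^ 2) • α

theorem inner_rootReflection_left (α β y : V) :
    ⟪rootReflection α β, y⟫ = ⟪β, y⟫ - 2 * ⟪α, β⟫ / ‖α‖ ^ 2 * ⟪α, y⟫ := by
  rw [rootReflection, inner_sub_left, real_inner_smul_left]

theorem inner_rootReflection_self (α β : V) : ⟪rootReflection α β, α⟫ = -⟪β, α⟫ := by
  rcases eq_or_ne α 0 with rfl | hα
  · simp
  rw [inner_rootReflection_left, real_inner_self_eq_norm_sq, real_inner_comm α β]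
  field_simp
  ring

theorem rootReflection_self {α : V} (hα : α ≠ 0) : rootReflection α α = -α := by
  have hnorm : ‖α‖ ^ 2 ≠ 0 := by positivity
  rw [rootReflection, real_inner_self_eq_norm_sq, mul_div_assoc, div_self hnorm]
  module

theorem rootReflection_involutive (α : V) : Function.Involutive (rootReflection α) := by
  intro β
  conv_lhs => rw [rootReflection, real_inner_comm, inner_rootReflection_self, real_inner_comm]
  rw [rootReflection]
  module

theorem drift_add_drift_rootReflection_nonpos {α₀ α x : V} {c : ℝ} (hc : 0 ≤ c)
    (hα₀x : 0 < ⟪α₀, x⟫) (hαx : 0 < ⟪α, x⟫) (hσx : 0 < ⟪rootReflection α₀ α, x⟫) :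
    c * ⟪α, α₀⟫ / ⟪α, x⟫ + c * ⟪rootReflection α₀ α, α₀⟫ / ⟪rootReflection α₀ α, x⟫ ≤ 0 := by
  have hb := inner_rootReflection_left α₀ α x
  rw [real_inner_comm α α₀] at hb
  rw [inner_rootReflection_self]
  set a := ⟪α, x⟫
  set b := ⟪rootReflection α₀ α, x⟫
  set p := ⟪α, α₀⟫
  have hshift : p * (b - a) = -(2 * p ^ 2 * ⟪α₀, x⟫ / ‖α₀‖ ^ 2) := by
    rw [hb]
    ring
  have hshift_nonpos : p * (b - a) ≤ 0 := by
    rw [hshift, neg_nonpos]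
    positivity
  calc c * p / a + c * -p / b = c * (p * (b - a)) / (a * b) := by field_simp; ring
    _ ≤ 0 := div_nonpos_of_nonpos_of_nonneg (mul_nonpos_of_nonneg_of_nonpos hc hshift_nonpos)
        (mul_pos hαx hσx).le

theorem rootReflection_mem_erase [DecidableEq V] {R Rpos S : Finset V}
    (hreduced : ∀ α ∈ R, ∀ β ∈ R, (∃ t : ℝ, β = t • α) → β = α ∨ β = -α)
    (hrefl : ∀ α ∈ R, ∀ β ∈ R, rootReflection α β ∈ R) (hRposR : (Rpos : Set V) ⊆ R)
    (hS : LinearIndepOn ℝ id (S : Set V))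
    (hpos : ∀ α ∈ Rpos, ∃ c : V → ℝ, (∀ s ∈ S, 0 ≤ c s) ∧ α = ∑ s ∈ S, c s • s)
    (hsplit : ∀ α ∈ R, α ∈ Rpos ∨ -α ∈ Rpos) {α₀ : V} (hα₀S : α₀ ∈ S) (hα₀ : α₀ ∈ Rpos)
    (hnegα₀ : -α₀ ∉ Rpos) {α : V} (hα : α ∈ Rpos.erase α₀) :
    rootReflection α₀ α ∈ Rpos.erase α₀ := by
  obtain ⟨hne, hαpos⟩ := Finset.mem_erase.mp hα
  have hα₀ne : α₀ ≠ 0 := by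
    rintro rfl
    exact hnegα₀ (by rwa [neg_zero])
  have hne_neg : α ≠ -α₀ := by
    rintro rfl
    exact hnegα₀ hαpos
  have hσne : rootReflection α₀ α ≠ α₀ := fun h => hne_neg (by
    rw [← rootReflection_involutive α₀ α, h, rootReflection_self hα₀ne])
  refine Finset.mem_erase.mpr ⟨hσne, ?_⟩
  by_contra hσpos
  have hσneg := (hsplit _ (hrefl _ (hRposR hα₀) _ (hRposR hαpos))).resolve_left hσpos
  obtain ⟨c, hc, hcα⟩ := hpos α hαpos
  obtain ⟨d, hd, hdσ⟩ := hpos _ hσneg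
  have hασ : α + -rootReflection α₀ α = (2 * ⟪α₀, α⟫ / ‖α₀‖ ^ 2) • α₀ := by
    rw [rootReflection]
    abel
  have hαmul : α = c α₀ • α₀ := hcα.trans <|
    sum_smul_eq_smul_of_add_eq_smul hS hα₀S hc hd (by rw [← hcα, ← hdσ, hασ])
  rcases hreduced α₀ (hRposR hα₀) α (hRposR hαpos) ⟨_, hαmul⟩ with h | h
  exacts [hne h, hne_neg h]

end Reflection

theorem sum_drift_nonpos_general
    {V : Type*} [DecidableEq V] [NormedAddCommGroup V] [InnerProductSpace ℝ V]
    (R Rpos S : Finset V)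
    (hreduced : ∀ α ∈ R, ∀ β ∈ R, (∃ t : ℝ, β = t • α) → β = α ∨ β = -α)
    (hrefl : ∀ α ∈ R, ∀ β ∈ R, β - (2 * ⟪α, β⟫ / ‖α‖ ^ 2) • α ∈ R)
    (hRposR : (Rpos : Set V) ⊆ (R : Set V))
    (hS : (S : Set V) ⊆ (Rpos : Set V))
    (hSli : LinearIndependent ℝ (fun s : (S : Set V) => (s : V)))
    (hpos : ∀ α ∈ R, α ∈ Rpos ↔ ∃ c : V → ℝ, (∀ s ∈ S, 0 ≤ c s) ∧ α = ∑ s ∈ S, c s • s)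
    (hsplit : ∀ α ∈ R, α ∈ Rpos ∨ -α ∈ Rpos)
    (k : V → ℝ) (hk0 : ∀ α ∈ R, 0 ≤ k α)
    (hkinv : ∀ α ∈ R, ∀ β ∈ R, k (β - (2 * ⟪α, β⟫ / ‖α‖ ^ 2) • α) = k β)
    (α₀ : V) (hα₀ : α₀ ∈ S)
    (x : V) (hx : ∀ α ∈ Rpos, 0 < ⟪α, x⟫) :
    ∑ α ∈ Rpos.erase α₀, k α * ⟪α, α₀⟫ / ⟪α, x⟫ ≤ 0 := by
  have hα₀x : 0 < ⟪α₀, x⟫ := hx α₀ (hS hα₀)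
  have hnegα₀ : -α₀ ∉ Rpos := fun h => by linarith [hx _ h, inner_neg_left (𝕜 := ℝ) α₀ x]
  have hmaps : ∀ α ∈ Rpos.erase α₀, rootReflection α₀ α ∈ Rpos.erase α₀ := fun α =>
    rootReflection_mem_erase hreduced hrefl hRposR hSli (fun α hα => (hpos α (hRposR hα)).mp hα)
      hsplit hα₀ (hS hα₀) hnegα₀
  refine Finset.sum_nonpos_of_involutive (rootReflection_involutive α₀) hmaps fun α hα => ?_
  have hαR := hRposR (Finset.mem_of_mem_erase hα)
  rw [show k (rootReflection α₀ α) = k α from hkinv α₀ (hRposR (hS hα₀)) α hαR]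
  exact drift_add_drift_rootReflection_nonpos (hk0 α hαR) hα₀x
    (hx α (Finset.mem_of_mem_erase hα)) (hx _ (Finset.mem_of_mem_erase (hmaps α hα)))

/-- For a Weyl-group–invariant multiplicity function `k ≥ 0` and a
simple root `α₀`, the sum `∑_{α ∈ R₊ \ {α₀}} k(α)⟪α, α₀⟫/⟪α, x⟫` is `≤ 0` for every
`x` in the open Weyl chamber. -/
theorem sum_drift_nonpos
    {V : Type*} [DecidableEq V] [NormedAddCommGroup V] [InnerProductSpace ℝ V] [FiniteDimensional ℝ V]
    (R Rpos S : Finset V)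
    (hR0 : ∀ α ∈ R, α ≠ (0 : V))
    (hreduced : ∀ α ∈ R, ∀ β ∈ R, (∃ t : ℝ, β = t • α) → β = α ∨ β = -α)
    (hrefl : ∀ α ∈ R, ∀ β ∈ R, β - (2 * ⟪α, β⟫ / ‖α‖ ^ 2) • α ∈ R)
    (hRposR : (Rpos : Set V) ⊆ (R : Set V))
    (hS : (S : Set V) ⊆ (Rpos : Set V))
    (hSli : LinearIndependent ℝ (fun s : (S : Set V) => (s : V)))
    (hpos : ∀ α ∈ R, α ∈ Rpos ↔ ∃ c : V → ℝ, (∀ s ∈ S, 0 ≤ c s) ∧ α = ∑ s ∈ S, c s • s)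
    (hsplit : ∀ α ∈ R, α ∈ Rpos ∨ -α ∈ Rpos)
    (k : V → ℝ) (hk0 : ∀ α ∈ R, 0 ≤ k α)
    (hkinv : ∀ α ∈ R, ∀ β ∈ R, k (β - (2 * ⟪α, β⟫ / ‖α‖ ^ 2) • α) = k β)
    (α₀ : V) (hα₀ : α₀ ∈ S)
    (x : V) (hx : ∀ α ∈ Rpos, 0 < ⟪α, x⟫) :
    ∑ α ∈ Rpos.erase α₀, k α * ⟪α, α₀⟫ / ⟪α, x⟫ ≤ 0 :=
  sum_drift_nonpos_general R Rpos S hreduced hrefl hRposR hS hSli hpos hsplit k hk0 hkinv α₀ hα₀ x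
    hx
end

section
/- Let R be a reduced root system, S a simple system, α₀ ∈ S, σ₀ = σ_{α₀}, and let P = {α ∈ R₊ \ {α₀} : ⟨α, α₀⟩ > 0}. Then for any function k : R → ℝ with k(σ₀(α)) = k(α) and any x in the open Weyl chamber C: Σ_{α ∈ R₊ \ {α₀}} k(α)⟨α,α₀⟩/⟨α,x⟩ = −Σ_{α ∈ P} k(α)·⟨α,α₀⟩·⟨α − σ₀(α), x⟩ / (⟨α,x⟩·⟨σ₀(α),x⟩). -/
/-!
The reflection `σ₀` in `α₀` is an involution of `R₊ \ {α₀}` that negates `⟪·, α₀⟫`. Hence the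
terms with `⟪α, α₀⟫ < 0` are the `σ₀`-images of the terms indexed by `P`, the terms with
`⟪α, α₀⟫ = 0` vanish, and, `k` being `σ₀`-invariant, each pair `α, σ₀ α` contributes
`k α ⟪α, α₀⟫ (1 / ⟪α, x⟫ - 1 / ⟪σ₀ α, x⟫)`.
-/

open scoped RealInnerProductSpace

open Finset

theorem LinearIndepOn.coeff_eq_ite_of_sum_smul_eq_smul {R V : Type*} [Ring R] [AddCommGroup V]
    [Module R V] [DecidableEq V] {S : Finset V} (hS : LinearIndepOn R id (S : Set V)) {a : V}
    (ha : a ∈ S) {c : V → R} {t : R} (h : ∑ s ∈ S, c s • s = t • a) :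
    ∀ s ∈ S, c s = if s = a then t else 0 := by
  refine linearIndepOn_finset_iffₛ.mp hS _ _ ?_
  simp only [id, ite_smul, zero_smul, sum_ite_eq', if_pos ha, h]

section Reflection

variable {V : Type*} [NormedAddCommGroup V] [InnerProductSpace ℝ V]

noncomputable def reflect (a v : V) : V := v - (2 * ⟪a, v⟫ / ‖a‖ ^ 2) • a

variable {a : V}

theorem sub_reflect (a v : V) : v - reflect a v = (2 * ⟪a, v⟫ / ‖a‖ ^ 2) • a :=
  sub_sub_cancel v _

theorem inner_reflect_left (a v x : V) :
    ⟪reflect a v, x⟫ = ⟪v, x⟫ - 2 * ⟪a, v⟫ / ‖a‖ ^ 2 * ⟪a, x⟫ := by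
  rw [reflect, inner_sub_left, real_inner_smul_left]

theorem inner_reflect_left_self (ha : a ≠ 0) (v : V) : ⟪reflect a v, a⟫ = -⟪v, a⟫ := by
  have : ‖a‖ ^ 2 ≠ 0 := by positivity
  rw [inner_reflect_left, real_inner_self_eq_norm_sq, real_inner_comm a v]
  field_simp
  ring

theorem reflect_reflect (ha : a ≠ 0) (v : V) : reflect a (reflect a v) = v := by
  have : ⟪a, reflect a v⟫ = -⟪a, v⟫ := by
    rw [real_inner_comm, inner_reflect_left_self ha, real_inner_comm]
  rw [reflect, this, reflect, mul_neg, neg_div, neg_smul, sub_neg_eq_add, sub_add_cancel]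

theorem reflect_self (a : V) (ha : a ≠ 0) : reflect a a = -a := by
  have : ‖a‖ ^ 2 ≠ 0 := by positivity
  rw [reflect, real_inner_self_eq_norm_sq, mul_div_assoc, div_self this, mul_one, two_smul,
    sub_add_cancel_left]

theorem drift_add_drift_reflect {a x α : V} (ha : a ≠ 0) {k : V → ℝ}
    (hk : k (reflect a α) = k α) (hα : ⟪α, x⟫ ≠ 0) (hσα : ⟪reflect a α, x⟫ ≠ 0) :
    k α * ⟪α, a⟫ / ⟪α, x⟫ + k (reflect a α) * ⟪reflect a α, a⟫ / ⟪reflect a α, x⟫ =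
      -(k α * ⟪α, a⟫ * ⟪α - reflect a α, x⟫ / (⟪α, x⟫ * ⟪reflect a α, x⟫)) := by
  rw [hk, inner_reflect_left_self ha, inner_sub_left]
  field_simp
  ring

end Reflection

theorem Finset.sum_eq_sum_filter_pos_add_of_involution {ι M G : Type*} [AddCommMonoid M]
    [AddCommGroup G] [LinearOrder G] [IsOrderedAddMonoid G]
    (E : Finset ι) (σ : ι → ι) (hσE : ∀ a ∈ E, σ a ∈ E) (hσσ : ∀ a ∈ E, σ (σ a) = a)
    (g : ι → G) (hg : ∀ a ∈ E, g (σ a) = -g a) (f : ι → M) (hf : ∀ a ∈ E, g a = 0 → f a = 0) :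
    ∑ a ∈ E, f a = ∑ a ∈ E with 0 < g a, (f a + f (σ a)) := by
  have hneg : ∑ a ∈ E with ¬0 < g a, f a = ∑ a ∈ E with g a < 0, f a := by
    refine (sum_subset (fun a ha => ?_) fun a ha hna => ?_).symm
    · simp only [mem_filter] at ha ⊢
      exact ⟨ha.1, ha.2.not_gt⟩
    · simp only [mem_filter, not_lt, not_and] at ha hna
      exact hf a ha.1 (le_antisymm ha.2 (hna ha.1))
  have hswap : ∑ a ∈ E with g a < 0, f a = ∑ a ∈ E with 0 < g a, f (σ a) := by
    refine sum_nbij' σ σ (fun a ha => ?_) (fun a ha => ?_) (fun a ha => ?_) (fun a ha => ?_)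
      fun a ha => ?_
    all_goals simp only [mem_filter] at ha ⊢
    · exact ⟨hσE a ha.1, by rw [hg a ha.1]; exact neg_pos.mpr ha.2⟩
    · exact ⟨hσE a ha.1, by rw [hg a ha.1]; exact neg_neg_iff_pos.mpr ha.2⟩
    · exact hσσ a ha.1
    · exact hσσ a ha.1
    · rw [hσσ a ha.1]
  rw [← sum_filter_add_sum_filter_not E (fun a => 0 < g a), hneg, hswap, sum_add_distrib]

section RootSystem

variable {V : Type*} [NormedAddCommGroup V] [InnerProductSpace ℝ V] [DecidableEq V]

theorem neg_notMem_nonneg_combination {S : Finset V} (hS : LinearIndepOn ℝ id (S : Set V))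
    {a : V} (ha : a ∈ S) : ¬∃ c : V → ℝ, (∀ s ∈ S, 0 ≤ c s) ∧ -a = ∑ s ∈ S, c s • s := by
  rintro ⟨c, hc, hsum⟩
  have hca := hS.coeff_eq_ite_of_sum_smul_eq_smul ha (t := -1) (by rw [neg_one_smul, hsum]) a ha
  rw [if_pos rfl] at hca
  linarith [hc a ha]

theorem eq_smul_of_nonneg_combinations_add_eq_smul {S : Finset V}
    (hS : LinearIndepOn ℝ id (S : Set V)) {a u w : V} (ha : a ∈ S) {c d : V → ℝ}
    (hc : ∀ s ∈ S, 0 ≤ c s) (hd : ∀ s ∈ S, 0 ≤ d s) (hu : u = ∑ s ∈ S, c s • s)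
    (hw : w = ∑ s ∈ S, d s • s) {t : ℝ} (huw : u + w = t • a) : u = c a • a := by
  have hcd : ∑ s ∈ S, (c s + d s) • s = t • a := by
    simp only [add_smul, sum_add_distrib, ← hu, ← hw, huw]
  have hcd0 := hS.coeff_eq_ite_of_sum_smul_eq_smul ha hcd
  rw [hu, sum_eq_single_of_mem a ha]
  intro s hs hsa
  have := hcd0 s hs
  rw [if_neg hsa] at this
  rw [le_antisymm (by linarith [hd s hs]) (hc s hs), zero_smul]

theorem reflect_mem_erase {R Rpos S : Finset V}
    (hreduced : ∀ α ∈ R, ∀ β ∈ R, (∃ t : ℝ, β = t • α) → β = α ∨ β = -α)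
    (hrefl : ∀ α ∈ R, ∀ β ∈ R, β - (2 * ⟪α, β⟫ / ‖α‖ ^ 2) • α ∈ R)
    (hRposR : (Rpos : Set V) ⊆ (R : Set V))
    (hSli : LinearIndepOn ℝ id (S : Set V))
    (hpos : ∀ α ∈ R, α ∈ Rpos ↔ ∃ c : V → ℝ, (∀ s ∈ S, 0 ≤ c s) ∧ α = ∑ s ∈ S, c s • s)
    (hsplit : ∀ α ∈ R, α ∈ Rpos ∨ -α ∈ Rpos)
    {α₀ : V} (hα₀ : α₀ ∈ S) (hα₀R : α₀ ∈ R) (hα₀0 : α₀ ≠ 0) {α : V} (hα : α ∈ Rpos.erase α₀) :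
    reflect α₀ α ∈ Rpos.erase α₀ := by
  obtain ⟨hne, hαpos⟩ := mem_erase.mp hα
  have hαR : α ∈ R := hRposR hαpos
  have hneg_α₀ : -α₀ ∉ Rpos := fun h =>
    neg_notMem_nonneg_combination hSli hα₀ ((hpos _ (hRposR h)).mp h)
  refine mem_erase.mpr ⟨fun h => hneg_α₀ ?_, ?_⟩
  · have hα_eq : α = -α₀ := by rw [← reflect_reflect hα₀0 α, h, reflect_self α₀ hα₀0]
    exact hα_eq ▸ hαpos
  by_contra hσα
  have hσαR : reflect α₀ α ∈ R := hrefl α₀ hα₀R α hαR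
  have hnegσα := (hsplit _ hσαR).resolve_left hσα
  obtain ⟨c, hc, hαc⟩ := (hpos α hαR).mp hαpos
  obtain ⟨d, hd, hσαd⟩ := (hpos _ (hRposR hnegσα)).mp hnegσα
  -- `α + (-σ₀ α) ∈ ℝ α₀` with both summands nonnegative combinations of `S`, so `α ∈ ℝ α₀`
  have hαs := eq_smul_of_nonneg_combinations_add_eq_smul hSli hα₀ hc hd hαc hσαd
    (by rw [← sub_eq_add_neg, sub_reflect])
  rcases hreduced α₀ hα₀R α hαR ⟨_, hαs⟩ with h | h
  · exact hne h
  · exact hneg_α₀ (h ▸ hαpos)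

end RootSystem

theorem sum_drift_pairing_general
    {V : Type*} [DecidableEq V] [NormedAddCommGroup V] [InnerProductSpace ℝ V]
    (R Rpos S : Finset V)
    (hR0 : ∀ α ∈ R, α ≠ (0 : V))
    (hreduced : ∀ α ∈ R, ∀ β ∈ R, (∃ t : ℝ, β = t • α) → β = α ∨ β = -α)
    (hrefl : ∀ α ∈ R, ∀ β ∈ R, β - (2 * ⟪α, β⟫ / ‖α‖ ^ 2) • α ∈ R)
    (hRposR : (Rpos : Set V) ⊆ (R : Set V))
    (hS : (S : Set V) ⊆ (Rpos : Set V))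
    (hSli : LinearIndependent ℝ (fun s : (S : Set V) => (s : V)))
    (hpos : ∀ α ∈ R, α ∈ Rpos ↔ ∃ c : V → ℝ, (∀ s ∈ S, 0 ≤ c s) ∧ α = ∑ s ∈ S, c s • s)
    (hsplit : ∀ α ∈ R, α ∈ Rpos ∨ -α ∈ Rpos)
    (α₀ : V) (hα₀ : α₀ ∈ S)
    (k : V → ℝ)
    (hkinv : ∀ α ∈ R, k (α - (2 * ⟪α₀, α⟫ / ‖α₀‖ ^ 2) • α₀) = k α)
    (P : Finset V) (hP : ∀ α, α ∈ P ↔ α ∈ Rpos.erase α₀ ∧ 0 < ⟪α, α₀⟫)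
    (x : V) (hx : ∀ α ∈ Rpos, 0 < ⟪α, x⟫) :
    ∑ α ∈ Rpos.erase α₀, k α * ⟪α, α₀⟫ / ⟪α, x⟫ =
      -∑ α ∈ P, k α * ⟪α, α₀⟫ *
          ⟪α - (α - (2 * ⟪α₀, α⟫ / ‖α₀‖ ^ 2) • α₀), x⟫ /
          (⟪α, x⟫ * ⟪α - (2 * ⟪α₀, α⟫ / ‖α₀‖ ^ 2) • α₀, x⟫) := by
  have hα₀R : α₀ ∈ R := hRposR (hS hα₀)
  have hα₀0 : α₀ ≠ 0 := hR0 α₀ hα₀R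
  have hσE : ∀ α ∈ Rpos.erase α₀, reflect α₀ α ∈ Rpos.erase α₀ := fun α hα =>
    reflect_mem_erase hreduced hrefl hRposR hSli hpos hsplit hα₀ hα₀R hα₀0 hα
  have hPE : P = {α ∈ Rpos.erase α₀ | 0 < ⟪α, α₀⟫} := by
    ext α
    rw [hP, mem_filter]
  rw [sum_eq_sum_filter_pos_add_of_involution (Rpos.erase α₀) (reflect α₀) hσE
    (fun α _ => reflect_reflect hα₀0 α) (⟪·, α₀⟫) (fun α _ => inner_reflect_left_self hα₀0 α) _
    (fun α _ h => by simp only [h, mul_zero, zero_div]), ← hPE, ← sum_neg_distrib]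
  refine sum_congr rfl fun α hαP => ?_
  have hαE := ((hP α).mp hαP).1
  exact drift_add_drift_reflect hα₀0 (hkinv α (hRposR (mem_erase.mp hαE).2))
    (hx α (mem_erase.mp hαE).2).ne' (hx _ (mem_erase.mp (hσE α hαE)).2).ne'

/-- Pairing each positive root `α ≠ α₀` with `⟪α, α₀⟫ > 0` with its
reflection `σ₀(α)`, the drift sum rewrites as
`∑_{α ∈ R₊\{α₀}} k(α)⟪α,α₀⟫/⟪α,x⟫
  = -∑_{α ∈ P} k(α)⟪α,α₀⟫⟪α - σ₀(α), x⟫/(⟪α,x⟫⟪σ₀(α),x⟫)`. -/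
theorem sum_drift_pairing
    {V : Type*} [DecidableEq V] [NormedAddCommGroup V] [InnerProductSpace ℝ V] [FiniteDimensional ℝ V]
    (R Rpos S : Finset V)
    (hR0 : ∀ α ∈ R, α ≠ (0 : V))
    (hreduced : ∀ α ∈ R, ∀ β ∈ R, (∃ t : ℝ, β = t • α) → β = α ∨ β = -α)
    (hrefl : ∀ α ∈ R, ∀ β ∈ R, β - (2 * ⟪α, β⟫ / ‖α‖ ^ 2) • α ∈ R)
    (hRposR : (Rpos : Set V) ⊆ (R : Set V))
    (hS : (S : Set V) ⊆ (Rpos : Set V))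
    (hSli : LinearIndependent ℝ (fun s : (S : Set V) => (s : V)))
    (hpos : ∀ α ∈ R, α ∈ Rpos ↔ ∃ c : V → ℝ, (∀ s ∈ S, 0 ≤ c s) ∧ α = ∑ s ∈ S, c s • s)
    (hsplit : ∀ α ∈ R, α ∈ Rpos ∨ -α ∈ Rpos)
    (α₀ : V) (hα₀ : α₀ ∈ S)
    (k : V → ℝ)
    (hkinv : ∀ α ∈ R, k (α - (2 * ⟪α₀, α⟫ / ‖α₀‖ ^ 2) • α₀) = k α)
    (P : Finset V) (hP : ∀ α, α ∈ P ↔ α ∈ Rpos.erase α₀ ∧ 0 < ⟪α, α₀⟫)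
    (x : V) (hx : ∀ α ∈ Rpos, 0 < ⟪α, x⟫) :
    ∑ α ∈ Rpos.erase α₀, k α * ⟪α, α₀⟫ / ⟪α, x⟫ =
      -∑ α ∈ P, k α * ⟪α, α₀⟫ *
          ⟪α - (α - (2 * ⟪α₀, α⟫ / ‖α₀‖ ^ 2) • α₀), x⟫ /
          (⟪α, x⟫ * ⟪α - (2 * ⟪α₀, α⟫ / ‖α₀‖ ^ 2) • α₀, x⟫) :=
  sum_drift_pairing_general R Rpos S hR0 hreduced hrefl hRposR hS hSli hpos hsplit α₀ hα₀ k hkinv P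
    hP x hx
end

section
/- Let α₀ be a simple root and suppose x ∈ C̄ lies in exactly one wall, i.e., ⟨α₀, x⟩ = 0 and ⟨α, x⟩ > 0 for all α ∈ S \ {α₀}. If n is a unit vector with ⟨x − a, n⟩ ≤ 0 for all a ∈ C̄ (unit inward normal at x), then n = α₀/|α₀|. -/
open scoped RealInnerProductSpace

/-!
Let `β_α` be the dual basis of `S` with respect to the inner product, so that moving `x` to
`x + t • β_α` changes only the `α`-coordinate `⟪α, x⟫`, by `t`, while `⟪x - a, n⟫` changes by
`-t ⟪β_α, n⟫`. Such moves stay in `C̄` for all `t ≥ 0`, and also for small negative `t` when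
`⟪α, x⟫ > 0`. Hence every coefficient `⟪β_α, n⟫` of `n` in the basis `S` is nonnegative, and it
vanishes for `α ≠ α₀`. So `n` is a nonnegative multiple of `α₀`, and `‖n‖ = 1` fixes the factor.
-/

namespace Module.Basis

theorem eq_repr_smul_of_repr_eq_zero {R M ι : Type*} [Semiring R] [AddCommMonoid M]
    [Module R M] (b : Basis ι R M) {n : M} {i : ι} (h : ∀ j, j ≠ i → b.repr n j = 0) :
    n = b.repr n i • b i := by
  classical
  have hrepr : b.repr n = Finsupp.single i (b.repr n i) := by
    ext j
    by_cases hj : j = i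
    · simp [hj]
    · simp [Ne.symm hj, h j hj]
  rw [← b.repr_symm_single, ← hrepr, LinearEquiv.symm_apply_apply]

variable {V ι : Type*} [NormedAddCommGroup V] [InnerProductSpace ℝ V] [FiniteDimensional ℝ V]
  (b : Basis ι ℝ V)

noncomputable def innerDual (i : ι) : V :=
  (InnerProductSpace.toDual ℝ V).symm (b.coord i).toContinuousLinearMap

theorem inner_innerDual_left (i : ι) (w : V) : ⟪b.innerDual i, w⟫ = b.repr w i := by
  simp [innerDual, InnerProductSpace.toDual_symm_apply]

theorem inner_innerDual_right (i j : ι) : ⟪b j, b.innerDual i⟫ = Finsupp.single j 1 i := by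
  rw [real_inner_comm, inner_innerDual_left, repr_self]

section InwardNormal

variable {b} {x n : V}

theorem mul_repr_nonneg_of_inward_normal (hx : ∀ j, 0 ≤ ⟪b j, x⟫)
    (hn : ∀ a, (∀ j, 0 ≤ ⟪b j, a⟫) → ⟪x - a, n⟫ ≤ 0) {i : ι} {t : ℝ} (ht : 0 ≤ ⟪b i, x⟫ + t) :
    0 ≤ t * b.repr n i := by
  have hmem : ∀ j, 0 ≤ ⟪b j, x + t • b.innerDual i⟫ := by
    intro j
    rw [inner_add_right, real_inner_smul_right, inner_innerDual_right]
    by_cases hj : j = i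
    · subst hj
      simpa using ht
    · simpa [Finsupp.single_apply, hj] using hx j
  have := hn _ hmem
  rwa [sub_add_cancel_left, inner_neg_left, real_inner_smul_left, inner_innerDual_left,
    neg_nonpos] at this

theorem repr_nonneg_of_inward_normal (hx : ∀ j, 0 ≤ ⟪b j, x⟫)
    (hn : ∀ a, (∀ j, 0 ≤ ⟪b j, a⟫) → ⟪x - a, n⟫ ≤ 0) (i : ι) : 0 ≤ b.repr n i := by
  simpa using mul_repr_nonneg_of_inward_normal hx hn (i := i) (t := 1) (by linarith [hx i])

theorem repr_eq_zero_of_inward_normal (hx : ∀ j, 0 ≤ ⟪b j, x⟫)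
    (hn : ∀ a, (∀ j, 0 ≤ ⟪b j, a⟫) → ⟪x - a, n⟫ ≤ 0)
    {i : ι} (hi : 0 < ⟪b i, x⟫) : b.repr n i = 0 := by
  have h := mul_repr_nonneg_of_inward_normal hx hn (i := i) (t := -⟪b i, x⟫) (by simp)
  have := repr_nonneg_of_inward_normal hx hn i
  nlinarith

end InwardNormal

end Module.Basis

theorem smul_eq_inv_norm_smul_of_norm_eq_one {E : Type*} [NormedAddCommGroup E]
    [NormedSpace ℝ E] {c : ℝ} {v : E} (hc : 0 ≤ c) (h : ‖c • v‖ = 1) :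
    c • v = ‖v‖⁻¹ • v := by
  rw [norm_smul, Real.norm_of_nonneg hc] at h
  rw [eq_inv_of_mul_eq_one_left h]

theorem unit_inward_normal_eq_simple_root_general
    {V : Type*} [NormedAddCommGroup V] [InnerProductSpace ℝ V] [FiniteDimensional ℝ V]
    (S : Finset V)
    (hSli : LinearIndependent ℝ (fun s : (S : Set V) => (s : V)))
    (hSspan : Submodule.span ℝ (S : Set V) = ⊤)
    (α₀ : V) (hα₀ : α₀ ∈ S)
    (x : V) (hx : ∀ α ∈ S, 0 ≤ ⟪α, x⟫)
    (hxwall : ∀ α ∈ S, α ≠ α₀ → 0 < ⟪α, x⟫)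
    (n : V) (hn1 : ‖n‖ = 1)
    (hn : ∀ a : V, (∀ α ∈ S, 0 ≤ ⟪α, a⟫) → ⟪x - a, n⟫ ≤ 0) :
    n = ‖α₀‖⁻¹ • α₀ := by
  set b := Module.Basis.mk hSli (by rw [Subtype.range_coe, hSspan])
  have hb (α : (S : Set V)) : b α = α := Module.Basis.mk_apply ..
  have hxb (α : (S : Set V)) : 0 ≤ ⟪b α, x⟫ := hb α ▸ hx α α.2
  have hnb (a : V) (ha : ∀ α : (S : Set V), 0 ≤ ⟪b α, a⟫) : ⟪x - a, n⟫ ≤ 0 :=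
    hn a fun α hα => by simpa [hb] using ha ⟨α, hα⟩
  let i₀ : (S : Set V) := ⟨α₀, hα₀⟩
  have hn_eq : n = b.repr n i₀ • α₀ := by
    rw [show α₀ = b i₀ from (hb i₀).symm]
    refine b.eq_repr_smul_of_repr_eq_zero fun α hα => b.repr_eq_zero_of_inward_normal hxb hnb ?_
    rw [hb]
    exact hxwall α α.2 fun h => hα (Subtype.ext h)
  rw [hn_eq] at hn1 ⊢
  exact smul_eq_inv_norm_smul_of_norm_eq_one (b.repr_nonneg_of_inward_normal hxb hnb i₀) hn1

/-- If `x ∈ C̄` lies in exactly one wall `H_{α₀}` (i.e. `⟪α₀, x⟫ = 0` and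
`⟪α, x⟫ > 0` for all other simple roots `α`) and `n` is a unit inward normal vector to
the Weyl chamber at `x`, then `n = α₀/‖α₀‖`. -/
theorem unit_inward_normal_eq_simple_root
    {V : Type*} [NormedAddCommGroup V] [InnerProductSpace ℝ V] [FiniteDimensional ℝ V]
    (S : Finset V)
    (hSli : LinearIndependent ℝ (fun s : (S : Set V) => (s : V)))
    (hSspan : Submodule.span ℝ (S : Set V) = ⊤)
    (hCne : {y : V | ∀ α ∈ S, 0 < ⟪α, y⟫}.Nonempty)
    (α₀ : V) (hα₀ : α₀ ∈ S)
    (x : V) (hx : ∀ α ∈ S, 0 ≤ ⟪α, x⟫)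
    (hxα₀ : ⟪α₀, x⟫ = 0)
    (hxwall : ∀ α ∈ S, α ≠ α₀ → 0 < ⟪α, x⟫)
    (n : V) (hn1 : ‖n‖ = 1)
    (hn : ∀ a : V, (∀ α ∈ S, 0 ≤ ⟪α, a⟫) → ⟪x - a, n⟫ ≤ 0) :
    n = ‖α₀‖⁻¹ • α₀ :=
  unit_inward_normal_eq_simple_root_general S hSli hSspan α₀ hα₀ x hx hxwall n hn1 hn
end
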